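/- arXiv:2012.01088 — 2 statements merged into one kernel-verified Lean document; each statement's English description precedes it below -/
import Mathlib

section
/- Let $F(\theta) = \left(\sum_{i=1}^d a_i^{1+\theta/2}\right)^{2/\theta}$ where each $a_i \geq 1$. Then $F$ is nonincreasing on the interval $[1,2]$. -/
/-!
With `p = 1 + θ / 2` we have `F θ = ‖a‖_p ^ (1 + 2 / θ)`, where `‖a‖_p = (∑ i, a i ^ p) ^ (1 / p)`.
The `ℓ^p` norm is nonincreasing in `p`, and it is at least `1` because every `a i ≥ 1`, so raising
it to the decreasing exponent `1 + 2 / θ` keeps `F` nonincreasing.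
-/

open Finset Real

namespace Real

theorem sum_rpow_le_rpow_sum {ι : Type*} (s : Finset ι) {b : ι → ℝ} (hb : ∀ i ∈ s, 0 ≤ b i)
    {r : ℝ} (hr : 1 ≤ r) : ∑ i ∈ s, b i ^ r ≤ (∑ i ∈ s, b i) ^ r := by
  classical
  induction s using Finset.induction_on with
  | empty => simp [zero_rpow (by linarith : r ≠ 0)]
  | insert j s hj ih =>
    have hb' : ∀ i ∈ s, 0 ≤ b i := fun i hi => hb i (mem_insert_of_mem hi)
    rw [sum_insert hj, sum_insert hj]
    calc b j ^ r + ∑ i ∈ s, b i ^ r ≤ b j ^ r + (∑ i ∈ s, b i) ^ r := by gcongr; exact ih hb'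
      _ ≤ (b j + ∑ i ∈ s, b i) ^ r :=
        add_rpow_le_rpow_add (hb j (mem_insert_self j s)) (sum_nonneg hb') hr

theorem sum_rpow_le_rpow_sum_rpow {ι : Type*} (s : Finset ι) {f : ι → ℝ}
    (hf : ∀ i ∈ s, 0 ≤ f i) {p q : ℝ} (hp : 0 < p) (hpq : p ≤ q) :
    ∑ i ∈ s, f i ^ q ≤ (∑ i ∈ s, f i ^ p) ^ (q / p) :=
  calc ∑ i ∈ s, f i ^ q = ∑ i ∈ s, (f i ^ p) ^ (q / p) :=
        sum_congr rfl fun i hi => by rw [← rpow_mul (hf i hi), mul_div_cancel₀ _ hp.ne']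
    _ ≤ (∑ i ∈ s, f i ^ p) ^ (q / p) :=
        sum_rpow_le_rpow_sum s (fun i hi => rpow_nonneg (hf i hi) p) ((one_le_div hp).mpr hpq)

end Real

theorem antitoneOn_sum_rpow_one_add_half_rpow_two_div {ι : Type*} [Fintype ι] {a : ι → ℝ}
    (ha : ∀ i, 1 ≤ a i) :
    AntitoneOn (fun θ : ℝ => (∑ i, a i ^ (1 + θ / 2)) ^ (2 / θ)) (Set.Ioi 0) := by
  intro x (hx : 0 < x) y (hy : 0 < y) hxy
  rcases isEmpty_or_nonempty ι with hι | hι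
  · simp [zero_rpow, hx.ne', hy.ne']
  obtain ⟨i₀⟩ := hι
  set p := 1 + x / 2
  set q := 1 + y / 2
  have hp : 0 < p := by positivity
  have hpq : p ≤ q := by simp only [p, q]; linarith
  have ha₀ : ∀ i ∈ univ, 0 ≤ a i := fun i _ => zero_le_one.trans (ha i)
  have hS : 1 ≤ ∑ i, a i ^ p :=
    (one_le_rpow (ha i₀) hp.le).trans
      (single_le_sum (fun i hi => rpow_nonneg (ha₀ i hi) p) (mem_univ i₀))
  -- `q * (2 / y) = 1 + 2 / y ≤ 1 + 2 / x = p * (2 / x)`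
  have hexp : q / p * (2 / y) ≤ 2 / x := by
    rw [div_mul_eq_mul_div, div_le_iff₀ hp]
    have h2 : 2 / y ≤ 2 / x := div_le_div_of_nonneg_left zero_le_two hx hxy
    have hq' : q * (2 / y) = 1 + 2 / y := by field_simp; ring
    have hp' : 2 / x * p = 1 + 2 / x := by field_simp; ring
    linarith
  calc (∑ i, a i ^ q) ^ (2 / y) ≤ ((∑ i, a i ^ p) ^ (q / p)) ^ (2 / y) :=
        rpow_le_rpow (sum_nonneg fun i hi => rpow_nonneg (ha₀ i hi) q)
          (sum_rpow_le_rpow_sum_rpow univ ha₀ hp hpq) (by positivity)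
    _ = (∑ i, a i ^ p) ^ (q / p * (2 / y)) := (rpow_mul (by positivity) _ _).symm
    _ ≤ (∑ i, a i ^ p) ^ (2 / x) := rpow_le_rpow_of_exponent_le hS hexp

theorem stmt_1 (d : ℕ) (a : Fin d → ℝ) (ha : ∀ i, 1 ≤ a i) :
    AntitoneOn (fun θ : ℝ => (∑ i, a i ^ (1 + θ / 2)) ^ (2 / θ))
      (Set.Icc (1 : ℝ) 2) :=
  (antitoneOn_sum_rpow_one_add_half_rpow_two_div ha).mono fun _ hθ => zero_lt_one.trans_le hθ.1
end

section
/- Fix $\zeta \in [0, 1/2)$ and $n \geq 1$. Let $\mathfrak{P} = \{p \in \mathbb{R}^n_+ : \sum_i p_i = 1, \ p_i \leq \frac{1}{n(1-\zeta)} \ \forall i\}$ be the CVaR ambiguity set. Then $\sup_{p \in \mathfrak{P}} \sum_{i=1}^n \left(p_i - \frac{1}{n}\right)^2 \leq \frac{1}{n^2} + \frac{1}{n}\cdot\frac{\zeta}{1-\zeta}$. -/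
/-!
For a probability vector `p`, `∑ (pᵢ - 1/n)² = ∑ pᵢ² - 1/n`, and the cap `pᵢ ≤ c` gives
`∑ pᵢ² ≤ c ∑ pᵢ = c`. With `c = 1/(n(1-ζ))` this bounds every value by
`c - 1/n = ζ/(n(1-ζ))`, which is nonnegative, so it also bounds the supremum (`sSup ∅ = 0` in `ℝ`).
-/

open Finset

lemma sum_sq_le_mul_sum_of_le {ι : Type*} (s : Finset ι) {p : ι → ℝ} {c : ℝ}
    (hp₀ : ∀ i ∈ s, 0 ≤ p i) (hpc : ∀ i ∈ s, p i ≤ c) :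
    ∑ i ∈ s, p i ^ 2 ≤ c * ∑ i ∈ s, p i := by
  rw [mul_sum]
  refine sum_le_sum fun i hi => ?_
  rw [sq, mul_comm c]
  exact mul_le_mul_of_nonneg_left (hpc i hi) (hp₀ i hi)

lemma sum_sub_inv_card_sq {ι : Type*} [Fintype ι] {p : ι → ℝ} (hp : ∑ i, p i = 1) :
    ∑ i, (p i - (Fintype.card ι : ℝ)⁻¹) ^ 2 = ∑ i, p i ^ 2 - (Fintype.card ι : ℝ)⁻¹ := by
  have hcard : (Fintype.card ι : ℝ) * (Fintype.card ι : ℝ)⁻¹ ^ 2 = (Fintype.card ι : ℝ)⁻¹ := by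
    simpa [sq, mul_assoc] using inv_mul_mul_self (Fintype.card ι : ℝ)⁻¹
  simp only [sub_sq, sum_add_distrib, sum_sub_distrib, ← sum_mul, ← mul_sum, hp, sum_const,
    card_univ, nsmul_eq_mul, hcard]
  ring

lemma inv_mul_one_sub_sub_inv (n : ℝ) {ζ : ℝ} (hζ : 1 - ζ ≠ 0) :
    (n * (1 - ζ))⁻¹ - n⁻¹ = n⁻¹ * (ζ / (1 - ζ)) := by
  rw [mul_inv, ← mul_sub_one]
  congr 1
  field_simp
  ring

theorem stmt_12_general (n : ℕ) (ζ : ℝ) (hζ : 0 ≤ ζ) (hζ' : ζ < 1 / 2) :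
    sSup {s : ℝ | ∃ p : Fin n → ℝ, (∀ i, 0 ≤ p i) ∧ (∑ i, p i = 1) ∧
        (∀ i, p i ≤ ((n : ℝ) * (1 - ζ))⁻¹) ∧ s = ∑ i, (p i - (n : ℝ)⁻¹) ^ 2} ≤
      1 / (n : ℝ) ^ 2 + (n : ℝ)⁻¹ * (ζ / (1 - ζ)) := by
  have hζ1 : 0 < 1 - ζ := by linarith
  refine Real.sSup_le ?_ (by positivity)
  rintro s ⟨p, hp₀, hp, hpc, rfl⟩
  have hvar := sum_sub_inv_card_sq hp
  rw [Fintype.card_fin] at hvar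
  have hcap := sum_sq_le_mul_sum_of_le univ (fun i _ => hp₀ i) (fun i _ => hpc i)
  rw [hp, mul_one] at hcap
  have hgap := inv_mul_one_sub_sub_inv n hζ1.ne'
  have : 0 ≤ 1 / (n : ℝ) ^ 2 := by positivity
  linarith

theorem stmt_12 (n : ℕ) (hn : 1 ≤ n) (ζ : ℝ) (hζ : 0 ≤ ζ) (hζ' : ζ < 1 / 2) :
    sSup {s : ℝ | ∃ p : Fin n → ℝ, (∀ i, 0 ≤ p i) ∧ (∑ i, p i = 1) ∧
        (∀ i, p i ≤ ((n : ℝ) * (1 - ζ))⁻¹) ∧ s = ∑ i, (p i - (n : ℝ)⁻¹) ^ 2} ≤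
      1 / (n : ℝ) ^ 2 + (n : ℝ)⁻¹ * (ζ / (1 - ζ)) :=
  stmt_12_general n ζ hζ hζ'
end
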